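/- Let ω be the step function ω(x) = p₀ + Σ_{j=1}^n (p_j − p_{j−1}) 1(x > x_j) with 0 ≤ x₁ ≤ … ≤ x_n and p_j ≥ 0, and write ω_k(x) = p₀ + Σ_{j=1}^k (p_j − p_{j−1}) 1(x > x_j). Let W^{(q)} denote q-scale functions satisfying W^{(q₂)} − W^{(q₁)} = (q₂−q₁) W^{(q₂)}∗W^{(q₁)}, and for fixed y let 𝒲_k(·,y) be the unique locally bounded solution of 𝒲_k(x,y) = W(x−y) + ∫_y^x W(x−z) ω_k(z) 𝒲_k(z,y) dz. Then 𝒲_{k+1}(x,y) = 𝒲_k(x,y) for all x ≤ x_{k+1}, and for all x: 𝒲_{k+1}(x,y) = 𝒲_k(x,y) + (p_{k+1} − p_k) ∫_{x_{k+1}}^x W^{(p_{k+1})}(x−z) 𝒲_k(z,y) dz. -/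

import Mathlib

/-
On `(-∞, x_{k+1}]` the potentials `ω_{k+1}` and `ω_k` agree, so `𝒲_{k+1}` and `𝒲_k` solve the
same Volterra equation there and coincide by a Gronwall iteration. Convolving the equation with
`W^{(q)}`, `q = p_{k+1}`, and using `W^{(q)} - W = q W^{(q)} ∗ W` rewrites it with kernel `W^{(q)}`
and potential `ω_j - q`. Beyond `x_{k+1}` one has `ω_{k+1} - q = 0` and `ω_k = p_k`, so subtracting
the rewritten equations for `j = k + 1` and `j = k` leaves
`(p_{k+1} - p_k) ∫_{x_{k+1}}^x W^{(q)}(x - z) 𝒲_k(z) dz`.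
The integral equation presupposes that `𝒲_k` is measurable; this is recovered from the equation.
-/

open Set MeasureTheory intervalIntegral Finset

def LocallyBdd (f : ℝ → ℝ) : Prop :=
  ∀ K : Set ℝ, IsCompact K → ∃ M : ℝ, ∀ x ∈ K, |f x| ≤ M

/-- The truncated step function `ω_k(z) = p₀ + Σ_{j=1}^k (p_j − p_{j−1}) 1(z > x_j)`. -/
noncomputable def stepOmega (p : ℕ → ℝ) (xs : ℕ → ℝ) (k : ℕ) (z : ℝ) : ℝ :=
  p 0 + ∑ j ∈ Finset.range k, (p (j + 1) - p j) * (if xs (j + 1) < z then (1:ℝ) else 0)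

open Function

namespace LocallyBdd

theorem of_continuous {f : ℝ → ℝ} (hf : Continuous f) : LocallyBdd f := fun K hK => by
  obtain ⟨M, hM⟩ := hK.exists_bound_of_continuousOn hf.continuousOn
  exact ⟨M, hM⟩

theorem mul {f g : ℝ → ℝ} (hf : LocallyBdd f) (hg : LocallyBdd g) :
    LocallyBdd fun x => f x * g x := fun K hK => by
  obtain ⟨M, hM⟩ := hf K hK
  obtain ⟨N, hN⟩ := hg K hK
  refine ⟨M * N, fun x hx => ?_⟩
  rw [abs_mul]
  exact mul_le_mul (hM x hx) (hN x hx) (abs_nonneg _) ((abs_nonneg _).trans (hM x hx))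

theorem sub {f g : ℝ → ℝ} (hf : LocallyBdd f) (hg : LocallyBdd g) :
    LocallyBdd fun x => f x - g x := fun K hK => by
  obtain ⟨M, hM⟩ := hf K hK
  obtain ⟨N, hN⟩ := hg K hK
  exact ⟨M + N, fun x hx => (abs_sub _ _).trans (add_le_add (hM x hx) (hN x hx))⟩

theorem sub_const {f : ℝ → ℝ} (hf : LocallyBdd f) (c : ℝ) : LocallyBdd fun x => f x - c :=
  hf.sub (of_continuous continuous_const)

theorem exists_nonneg_bound {f : ℝ → ℝ} (hf : LocallyBdd f) {K : Set ℝ} (hK : IsCompact K) :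
    ∃ M, 0 ≤ M ∧ ∀ x ∈ K, |f x| ≤ M := by
  obtain ⟨M, hM⟩ := hf K hK
  exact ⟨|M|, abs_nonneg M, fun x hx => (hM x hx).trans (le_abs_self M)⟩

theorem intervalIntegrable {f : ℝ → ℝ} (hf : LocallyBdd f) (hm : AEStronglyMeasurable f)
    (a b : ℝ) : IntervalIntegrable f volume a b := by
  obtain ⟨M, hM⟩ := hf (uIcc a b) isCompact_uIcc
  exact (IntegrableOn.of_bound isCompact_uIcc.measure_lt_top hm.restrict M
    ((ae_restrict_iff' measurableSet_uIcc).2 (ae_of_all _ hM))).intervalIntegrable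

end LocallyBdd

theorem LocallyBdd.stepOmega (p xs : ℕ → ℝ) (k : ℕ) : LocallyBdd (stepOmega p xs k) :=
  fun _ _ => ⟨|p 0| + ∑ j ∈ range k, |p (j + 1) - p j|, fun z _ => by
    refine (abs_add_le _ _).trans (add_le_add_right ((abs_sum_le_sum_abs _ _).trans ?_) _)
    refine sum_le_sum fun j _ => ?_
    split_ifs <;> simp⟩

theorem measurable_stepOmega (p xs : ℕ → ℝ) (k : ℕ) : Measurable (stepOmega p xs k) :=
  measurable_const.add <| Finset.measurable_sum _ fun _ _ =>
    (Measurable.ite measurableSet_Ioi measurable_const measurable_const).const_mul _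

theorem stepOmega_succ_of_le {p xs : ℕ → ℝ} {k : ℕ} {z : ℝ} (hz : z ≤ xs (k + 1)) :
    stepOmega p xs (k + 1) z = stepOmega p xs k z := by
  simp [stepOmega, sum_range_succ, not_lt.2 hz]

theorem stepOmega_of_lt {p xs : ℕ → ℝ} (hxs : Monotone xs) {k : ℕ} {z : ℝ} (hz : xs k < z) :
    stepOmega p xs k z = p k := by
  have hjump : ∀ j ∈ range k,
      (p (j + 1) - p j) * (if xs (j + 1) < z then (1:ℝ) else 0) = p (j + 1) - p j :=
    fun j hj => by
      rw [if_pos ((hxs (mem_range.1 hj)).trans_lt hz), mul_one]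
  rw [stepOmega, sum_congr rfl hjump, sum_range_sub]
  ring

theorem stepOmega_succ_sub_mul_sub {p xs : ℕ → ℝ} (hxs : Monotone xs) {k : ℕ} {F₁ F : ℝ → ℝ}
    (hF : ∀ z ≤ xs (k + 1), F₁ z = F z) (z : ℝ) :
    (stepOmega p xs (k + 1) z - p (k + 1)) * F₁ z - (stepOmega p xs k z - p (k + 1)) * F z
      = (p (k + 1) - p k) * (Ioi (xs (k + 1))).indicator F z := by
  by_cases hz : z ∈ Ioi (xs (k + 1))
  · rw [indicator_of_mem hz, stepOmega_of_lt hxs hz,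
      stepOmega_of_lt hxs ((hxs (Nat.le_succ k)).trans_lt hz)]
    ring
  · rw [indicator_of_notMem hz, stepOmega_succ_of_le (not_lt.1 hz), hF z (not_lt.1 hz)]
    ring

theorem Continuous.eq_zero_of_nonpos {W : ℝ → ℝ} (hW : Continuous W)
    (hneg : ∀ s < 0, W s = 0) {s : ℝ} (hs : s ≤ 0) : W s = 0 := by
  have : Iio (0:ℝ) ⊆ {s | W s = 0} := hneg
  rw [← (isClosed_eq hW continuous_const).closure_subset_iff, closure_Iio] at this
  exact this hs

theorem intervalIntegrable_comp_sub_mul {A h : ℝ → ℝ} (hA : Continuous A) (hh : Measurable h)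
    (hhb : LocallyBdd h) (x a b : ℝ) :
    IntervalIntegrable (fun z => A (x - z) * h z) volume a b :=
  ((LocallyBdd.of_continuous (hA.comp (continuous_sub_left x))).mul hhb).intervalIntegrable
    ((hA.measurable.comp (measurable_const_sub x)).mul hh).aestronglyMeasurable a b

theorem eqOn_zero_of_abs_le_mul_integral {F : ℝ → ℝ} {y c C : ℝ} (hC : 0 ≤ C)
    (hFb : LocallyBdd F) (hF : ∀ x ∈ Icc y c, |F x| ≤ C * ∫ z in y..x, |F z|) :
    EqOn F 0 (Icc y c) := by
  obtain ⟨M, hM⟩ := hFb (Icc y c) isCompact_Icc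
  have hpow : ∀ m : ℕ, ∀ x ∈ Icc y c, |F x| ≤ M * (C * (x - y)) ^ m / m.factorial := by
    intro m
    induction m with
    | zero => simpa using hM
    | succ m ih =>
      intro x hx
      have hbound : ∫ z in y..x, |F z| ≤ ∫ z in y..x, M * (C * (z - y)) ^ m / m.factorial := by
        rw [integral_of_le hx.1, integral_of_le hx.1]
        refine integral_mono_of_nonneg (ae_of_all _ fun z => abs_nonneg _)
          (Continuous.integrableOn_Ioc (by fun_prop)) ((ae_restrict_iff' measurableSet_Ioc).2
            (ae_of_all _ fun z hz => ih z ⟨hz.1.le, hz.2.trans hx.2⟩))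
      have hint : ∫ z in y..x, M * (C * (z - y)) ^ m / m.factorial
          = M * C ^ m / m.factorial * ((x - y) ^ (m + 1) / (m + 1)) := by
        have hfactor : ∀ z, M * (C * (z - y)) ^ m / m.factorial
            = M * C ^ m / m.factorial * (z - y) ^ m := fun z => by rw [mul_pow]; ring
        simp_rw [hfactor]
        rw [intervalIntegral.integral_const_mul, integral_comp_sub_right (fun z => z ^ m)]
        simp [integral_pow]
      calc |F x| ≤ C * ∫ z in y..x, |F z| := hF x hx
        _ ≤ C * (M * C ^ m / m.factorial * ((x - y) ^ (m + 1) / (m + 1))) :=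
          hint ▸ mul_le_mul_of_nonneg_left hbound hC
        _ = M * (C * (x - y)) ^ (m + 1) / (m + 1).factorial := by
          rw [Nat.factorial_succ, mul_pow]
          push_cast
          field_simp
          ring
  intro x hx
  have hlim := (FloorSemiring.tendsto_pow_div_factorial_atTop (C * (x - y))).const_mul M
  simp_rw [mul_zero, ← mul_div_assoc] at hlim
  exact abs_eq_zero.1 (le_antisymm (ge_of_tendsto' hlim fun m => hpow m x hx) (abs_nonneg _))

theorem exists_maximal_isOpen_aemeasurable {α β : Type*} [TopologicalSpace α]
    [SecondCountableTopology α] [MeasurableSpace α] [MeasurableSpace β] (μ : Measure α)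
    (h : α → β) :
    ∃ G, IsOpen G ∧ AEMeasurable h (μ.restrict G) ∧
      ∀ U, IsOpen U → AEMeasurable h (μ.restrict U) → U ⊆ G := by
  set C := {U ∈ TopologicalSpace.countableBasis α | AEMeasurable h (μ.restrict U)}
  have : Countable C :=
    ((TopologicalSpace.countable_countableBasis α).mono (sep_subset _ _)).to_subtype
  refine ⟨⋃₀ C, isOpen_sUnion fun U hU => TopologicalSpace.isOpen_of_mem_countableBasis hU.1,
    ?_, fun U hU hhU x hx => ?_⟩
  · rw [sUnion_eq_iUnion]
    exact aemeasurable_iUnion_iff.2 fun U => U.2.2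
  · obtain ⟨b, hb, hxb, hbU⟩ :=
      (TopologicalSpace.isBasis_countableBasis α).exists_subset_of_mem_open hx hU
    exact ⟨b, ⟨hb, hhU.mono_measure (Measure.restrict_mono hbU le_rfl)⟩, hxb⟩

theorem measurable_setIntegral_Ioc {f : ℝ → ℝ → ℝ} (hf : Measurable (uncurry f)) (y : ℝ) :
    Measurable fun x => ∫ z in Ioc y x, f x z := by
  have hregion : MeasurableSet {q : ℝ × ℝ | q.2 ∈ Ioc y q.1} :=
    (measurable_snd measurableSet_Ioi).inter (measurableSet_le measurable_snd measurable_fst)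
  have hind : Measurable (uncurry fun x z => (Ioc y x).indicator (f x) z) :=
    hf.ite hregion measurable_const
  simp_rw [← MeasureTheory.integral_indicator measurableSet_Ioc]
  exact (hind.stronglyMeasurable.integral_prod_right').measurable

theorem setIntegral_Ioc_kernel_mul_eq_ite {K : ℝ → ℝ → ℝ} (hK : ∀ x, Continuous (K x))
    {h h' : ℝ → ℝ} {G : Set ℝ} (hh' : ∀ᵐ z, z ∈ G → h z = h' z)
    (hGmax : ∀ U, IsOpen U → AEMeasurable h (volume.restrict U) → U ⊆ G) (y x : ℝ) :
    ∫ z in Ioc y x, K x z * h z =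
      if volume {z | z ∈ Ioo y x ∧ K x z ≠ 0 ∧ z ∉ G} = 0 then
        ∫ z in Ioc y x, G.indicator (fun z => K x z * h' z) z
      else 0 := by
  split_ifs with hE
  · have hE' := measure_eq_zero_iff_ae_notMem.1 hE
    have hx : ∀ᵐ z, z ≠ x := measure_eq_zero_iff_ae_notMem.1 (measure_singleton x)
    refine integral_congr_ae ((ae_restrict_iff' measurableSet_Ioc).2 ?_)
    filter_upwards [hh', hE', hx] with z hzh hzE hzx hz
    by_cases hzG : z ∈ G
    · rw [indicator_of_mem hzG, hzh hzG]
    · have hKz : K x z = 0 := not_not.1 fun hK0 =>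
        hzE ⟨⟨hz.1, lt_of_le_of_ne hz.2 hzx⟩, hK0, hzG⟩
      rw [indicator_of_notMem hzG, hKz, zero_mul]
  · refine integral_undef fun hint => hE ?_
    set V := {z | z ∈ Ioo y x ∧ K x z ≠ 0}
    have hVo : IsOpen V := isOpen_Ioo.inter (isOpen_compl_singleton.preimage (hK x))
    have hKh : AEMeasurable (fun z => K x z * h z) (volume.restrict V) :=
      hint.aemeasurable.mono_measure
        (Measure.restrict_mono (fun z hz => Set.Ioo_subset_Ioc_self hz.1) le_rfl)
    have hVh : AEMeasurable h (volume.restrict V) := by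
      refine ((hK x).measurable.inv.aemeasurable.mul hKh).congr ?_
      filter_upwards [ae_restrict_mem hVo.measurableSet] with z hz
      simp [inv_mul_cancel_left₀ hz.2]
    have hempty : {z | z ∈ Ioo y x ∧ K x z ≠ 0 ∧ z ∉ G} = ∅ :=
      eq_empty_of_forall_notMem fun z hz => hz.2.2 (hGmax V hVo hVh ⟨hz.1, hz.2.1⟩)
    rw [hempty, measure_empty]

/- No measurability of `h` is assumed. With `G` the largest open set on which `h` is
a.e.-measurable, the integral at `x` is the junk value `0` exactly when
`{z ∈ (y, x) | K x z ≠ 0} \ G` has positive measure, and otherwise the integral of a measurable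
function. -/
theorem measurable_setIntegral_Ioc_kernel_mul {K : ℝ → ℝ → ℝ} (hK : Continuous (uncurry K))
    (h : ℝ → ℝ) (y : ℝ) : Measurable fun x => ∫ z in Ioc y x, K x z * h z := by
  obtain ⟨G, hGo, hGh, hGmax⟩ := exists_maximal_isOpen_aemeasurable volume h
  have hS : MeasurableSet {q : ℝ × ℝ | q.2 ∈ Ioo y q.1 ∧ K q.1 q.2 ≠ 0 ∧ q.2 ∉ G} :=
    ((measurableSet_lt measurable_const measurable_snd).inter
      (measurableSet_lt measurable_snd measurable_fst)).inter
      ((hK.measurable (measurableSet_singleton 0)).compl.inter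
        (measurable_snd hGo.measurableSet).compl)
  have hK' : Measurable (uncurry fun x z => G.indicator (fun z => K x z * hGh.mk h z) z) :=
    (hK.measurable.mul (hGh.measurable_mk.comp measurable_snd)).ite
      (measurable_snd hGo.measurableSet) measurable_const
  simp_rw [setIntegral_Ioc_kernel_mul_eq_ite (K := K) (fun x => hK.comp (.prodMk_right x))
    ((ae_restrict_iff' hGo.measurableSet).1 hGh.ae_eq_mk) hGmax y]
  exact Measurable.ite (measurable_measure_prodMk_left hS (measurableSet_singleton 0))
    (measurable_setIntegral_Ioc hK' y) measurable_const

noncomputable def causalConv (A B : ℝ → ℝ) (s : ℝ) : ℝ :=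
  ∫ v in (0:ℝ)..s, A (s - v) * B v

section causalConv

variable {A B : ℝ → ℝ}

theorem integral_comp_sub_mul_comp_sub (hA : Continuous A) (hB : Continuous B)
    (hBneg : ∀ s < 0, B s = 0) {x y u : ℝ} (hyu : y ≤ u) :
    ∫ z in y..x, A (x - z) * B (z - u) = causalConv A B (x - u) := by
  have hcont : Continuous fun z => A (x - z) * B (z - u) := by fun_prop
  rw [← integral_add_adjacent_intervals (hcont.intervalIntegrable y u)
    (hcont.intervalIntegrable u x)]
  have hbefore : ∫ z in y..u, A (x - z) * B (z - u) = 0 := by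
    refine (integral_congr fun z hz => ?_).trans integral_zero
    rw [uIcc_of_le hyu] at hz
    rw [hB.eq_zero_of_nonpos hBneg (by linarith [hz.2]), mul_zero]
  have hshift : ∀ z, A (x - z) * B (z - u) = A (x - u - (z - u)) * B (z - u) := fun z => by
    ring_nf
  rw [hbefore, zero_add, causalConv]
  simp_rw [hshift]
  rw [integral_comp_sub_right (fun v => A (x - u - v) * B v), sub_self]

theorem integrable_comp_sub_mul_comp_sub_mul (hA : Continuous A) (hB : Continuous B)
    {f : ℝ → ℝ} (hf : Measurable f) (hfb : LocallyBdd f) (x y b : ℝ) :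
    Integrable (uncurry fun z u => A (x - z) * (B (z - u) * f u))
      ((volume.restrict (Ioc y b)).prod (volume.restrict (Ioc y b))) := by
  obtain ⟨CA, hCA0, hCA⟩ := (LocallyBdd.of_continuous hA).exists_nonneg_bound
    (isCompact_Icc (a := x - b) (b := x - y))
  obtain ⟨CB, hCB0, hCB⟩ := (LocallyBdd.of_continuous hB).exists_nonneg_bound
    (isCompact_Icc (a := y - b) (b := b - y))
  obtain ⟨Cf, -, hCf⟩ := hfb.exists_nonneg_bound (isCompact_Icc (a := y) (b := b))
  have hm : Measurable fun q : ℝ × ℝ => A (x - q.1) * (B (q.1 - q.2) * f q.2) := by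
    have := hA.measurable; have := hB.measurable; fun_prop
  rw [Measure.prod_restrict]
  refine IntegrableOn.of_bound ((measure_mono (prod_mono Set.Ioc_subset_Icc_self
    Set.Ioc_subset_Icc_self)).trans_lt (isCompact_Icc.prod isCompact_Icc).measure_lt_top)
    hm.aestronglyMeasurable (CA * (CB * Cf))
    ((ae_restrict_iff' (measurableSet_Ioc.prod measurableSet_Ioc)).2 (ae_of_all _ ?_))
  rintro ⟨z, u⟩ ⟨hz, hu⟩
  simp only [uncurry_apply_pair, Real.norm_eq_abs, abs_mul]
  exact mul_le_mul (hCA _ ⟨by linarith [hz.2], by linarith [hz.1]⟩)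
    (mul_le_mul (hCB _ ⟨by linarith [hz.1, hu.2], by linarith [hz.2, hu.1]⟩)
      (hCf _ ⟨hu.1.le, hu.2⟩) (abs_nonneg _) hCB0) (by positivity) hCA0

theorem integral_comp_sub_mul_integral (hA : Continuous A) (hB : Continuous B)
    (hBneg : ∀ s < 0, B s = 0) {f : ℝ → ℝ} (hf : Measurable f) (hfb : LocallyBdd f)
    {x y : ℝ} (hyx : y ≤ x) :
    ∫ z in y..x, A (x - z) * ∫ u in y..z, B (z - u) * f u
      = ∫ u in y..x, causalConv A B (x - u) * f u := by
  set S := Ioc y x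
  have hinner : ∀ z ∈ S, ∫ u in y..z, B (z - u) * f u = ∫ u in S, B (z - u) * f u := by
    intro z hz
    rw [integral_of_le hz.1.le]
    refine (setIntegral_eq_of_subset_of_forall_sdiff_eq_zero measurableSet_Ioc
      (Ioc_subset_Ioc_right hz.2) fun u hu => ?_).symm
    have hzu : z < u := not_le.1 fun h => hu.2 ⟨hu.1.1, h⟩
    rw [hBneg _ (sub_neg.2 hzu), zero_mul]
  have hprod := integrable_comp_sub_mul_comp_sub_mul hA hB hf hfb x y x
  rw [integral_of_le hyx, integral_of_le hyx]
  calc ∫ z in S, A (x - z) * ∫ u in y..z, B (z - u) * f u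
      = ∫ z in S, ∫ u in S, A (x - z) * (B (z - u) * f u) :=
        setIntegral_congr_fun measurableSet_Ioc fun z hz => by
          rw [hinner z hz, MeasureTheory.integral_const_mul]
    _ = ∫ u in S, ∫ z in S, A (x - z) * (B (z - u) * f u) := integral_integral_swap hprod
    _ = ∫ u in S, causalConv A B (x - u) * f u :=
        setIntegral_congr_fun measurableSet_Ioc fun u hu => by
          rw [← integral_comp_sub_mul_comp_sub hA hB hBneg hu.1.le, integral_of_le hyx,
            ← MeasureTheory.integral_mul_const]
          simp_rw [mul_assoc]
          rfl

end causalConv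

structure IsVolterraSolution (W g : ℝ → ℝ) (y : ℝ) (F : ℝ → ℝ) : Prop where
  below : ∀ x < y, F x = W (x - y)
  eq : ∀ x ≥ y, F x = W (x - y) + ∫ z in y..x, W (x - z) * g z * F z

namespace IsVolterraSolution

variable {W g F : ℝ → ℝ} {y : ℝ}

theorem measurable (hF : IsVolterraSolution W g y F) (hW : Continuous W) : Measurable F := by
  have hform : F = fun x => if x < y then W (x - y)
      else W (x - y) + ∫ z in Ioc y x, W (x - z) * (g z * F z) := by
    funext x
    split_ifs with hxy
    · exact hF.below x hxy
    · rw [hF.eq x (not_lt.1 hxy), integral_of_le (not_lt.1 hxy)]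
      simp_rw [mul_assoc]
  have hWm : Measurable fun x => W (x - y) := hW.measurable.comp (measurable_sub_const y)
  rw [hform]
  exact hWm.ite measurableSet_Iio (hWm.add (measurable_setIntegral_Ioc_kernel_mul
    (K := fun x z => W (x - z)) (hW.comp (continuous_fst.sub continuous_snd)) _ y))

theorem eq_zero_of_le (hF : IsVolterraSolution W g y F) (hW : Continuous W)
    (hWneg : ∀ s < 0, W s = 0) {x : ℝ} (hx : x ≤ y) : F x = 0 := by
  rcases hx.lt_or_eq with hx | rfl
  · rw [hF.below x hx, hWneg _ (sub_neg.2 hx)]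
  · rw [hF.eq x le_rfl, integral_same, sub_self, hW.eq_zero_of_nonpos hWneg le_rfl, add_zero]

theorem intervalIntegrable_integrand (hF : IsVolterraSolution W g y F) (hW : Continuous W)
    (hg : Measurable g) (hgb : LocallyBdd g) (hFb : LocallyBdd F) (x a b : ℝ) :
    IntervalIntegrable (fun z => W (x - z) * g z * F z) volume a b := by
  simpa only [mul_assoc] using intervalIntegrable_comp_sub_mul (h := fun z => g z * F z) hW
    (hg.mul (hF.measurable hW)) (hgb.mul hFb) x a b

theorem sub_eq_integral {g₁ F₁ : ℝ → ℝ} (hF₁ : IsVolterraSolution W g₁ y F₁)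
    (hF : IsVolterraSolution W g y F) (hW : Continuous W) (hWneg : ∀ s < 0, W s = 0)
    (hg₁ : Measurable g₁) (hg₁b : LocallyBdd g₁) (hg : Measurable g) (hgb : LocallyBdd g)
    (hF₁b : LocallyBdd F₁) (hFb : LocallyBdd F) (x : ℝ) :
    F₁ x - F x = ∫ z in y..x, W (x - z) * (g₁ z * F₁ z - g z * F z) := by
  rcases lt_or_ge x y with hxy | hxy
  · rw [hF₁.below x hxy, hF.below x hxy, sub_self, integral_of_ge hxy.le,
      setIntegral_eq_zero_of_forall_eq_zero fun z hz => by rw [hWneg _ (sub_neg.2 hz.1), zero_mul],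
      neg_zero]
  rw [hF₁.eq x hxy, hF.eq x hxy, add_sub_add_left_eq_sub, ← intervalIntegral.integral_sub
    (hF₁.intervalIntegrable_integrand hW hg₁ hg₁b hF₁b x y x)
    (hF.intervalIntegrable_integrand hW hg hgb hFb x y x)]
  exact integral_congr fun z _ => by ring

theorem eq_of_le {g₁ F₁ : ℝ → ℝ} {c : ℝ} (hF₁ : IsVolterraSolution W g₁ y F₁)
    (hF : IsVolterraSolution W g y F) (hW : Continuous W) (hg : Measurable g)
    (hgb : LocallyBdd g) (hF₁b : LocallyBdd F₁) (hFb : LocallyBdd F)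
    (hg₁ : EqOn g₁ g (Icc y c)) {x : ℝ} (hxc : x ≤ c) : F₁ x = F x := by
  rcases lt_or_ge x y with hxy | hxy
  · rw [hF₁.below x hxy, hF.below x hxy]
  obtain ⟨CW, hCW0, hCW⟩ := (LocallyBdd.of_continuous hW).exists_nonneg_bound
    (isCompact_Icc (a := 0) (b := c - y))
  obtain ⟨Cg, hCg0, hCg⟩ := hgb.exists_nonneg_bound (isCompact_Icc (a := y) (b := c))
  have hF₁m := hF₁.measurable hW
  have hFm := hF.measurable hW
  have hint : ∀ G : ℝ → ℝ, Measurable G → LocallyBdd G → ∀ x,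
      IntervalIntegrable (fun z => W (x - z) * g z * G z) volume y x := fun G hG hGb x => by
    simpa only [mul_assoc] using
      intervalIntegrable_comp_sub_mul (h := fun z => g z * G z) hW (hg.mul hG) (hgb.mul hGb) x y x
  have hD : ∀ x ∈ Icc y c, F₁ x - F x = ∫ z in y..x, W (x - z) * g z * (F₁ z - F z) := by
    intro x hx
    have hpot : ∫ z in y..x, W (x - z) * g₁ z * F₁ z = ∫ z in y..x, W (x - z) * g z * F₁ z :=
      integral_congr fun z hz => by
        rw [uIcc_of_le hx.1] at hz
        rw [hg₁ ⟨hz.1, hz.2.trans hx.2⟩]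
    rw [hF₁.eq x hx.1, hF.eq x hx.1, hpot, add_sub_add_left_eq_sub,
      ← integral_sub (hint F₁ hF₁m hF₁b x) (hint F hFm hFb x)]
    simp_rw [mul_sub]
  have hDm : Measurable fun z => F₁ z - F z := hF₁m.sub hFm
  have hDb : LocallyBdd fun z => F₁ z - F z := hF₁b.sub hFb
  refine sub_eq_zero.1 (eqOn_zero_of_abs_le_mul_integral (mul_nonneg hCW0 hCg0) hDb
    (fun x hx => ?_) ⟨hxy, hxc⟩)
  calc |F₁ x - F x| ≤ ∫ z in y..x, |W (x - z) * g z * (F₁ z - F z)| := by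
        rw [hD x hx]; exact abs_integral_le_integral_abs hx.1
    _ ≤ ∫ z in y..x, CW * Cg * |F₁ z - F z| := by
        refine integral_mono_on hx.1 (hint _ hDm hDb x).abs
          ((hDb.intervalIntegrable hDm.aestronglyMeasurable y x).abs.const_mul _) fun z hz => ?_
        rw [abs_mul, abs_mul]
        gcongr
        · exact hCW _ ⟨by linarith [hz.2], by linarith [hz.1, hx.2]⟩
        · exact hCg _ ⟨hz.1, hz.2.trans hx.2⟩
    _ = CW * Cg * ∫ z in y..x, |F₁ z - F z| := intervalIntegral.integral_const_mul _ _

theorem integral_comp_sub_mul (hF : IsVolterraSolution W g y F) (hW : Continuous W)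
    (hWneg : ∀ s < 0, W s = 0) {A : ℝ → ℝ} (hA : Continuous A) (hg : Measurable g)
    (hgb : LocallyBdd g) (hFb : LocallyBdd F) {x : ℝ} (hx : y ≤ x) :
    ∫ z in y..x, A (x - z) * F z
      = causalConv A W (x - y) + ∫ u in y..x, causalConv A W (x - u) * (g u * F u) := by
  have hFm := hF.measurable hW
  have hinner : ∫ z in y..x, A (x - z) * ∫ u in y..z, W (z - u) * (g u * F u)
      = (∫ z in y..x, A (x - z) * F z) - ∫ z in y..x, A (x - z) * W (z - y) := by
    rw [← intervalIntegral.integral_sub (intervalIntegrable_comp_sub_mul hA hFm hFb x y x)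
      ((by fun_prop : Continuous fun z => A (x - z) * W (z - y)).intervalIntegrable y x)]
    refine integral_congr fun z hz => ?_
    rw [uIcc_of_le hx] at hz
    simp only [hF.eq z hz.1, mul_assoc]
    ring
  rw [← integral_comp_sub_mul_comp_sub hA hW hWneg le_rfl, ← integral_comp_sub_mul_integral hA hW
    hWneg (f := fun u => g u * F u) (hg.mul hFm) (hgb.mul hFb) hx, hinner]
  ring

theorem change_of_killing (hF : IsVolterraSolution W g y F) (hW : Continuous W)
    (hWneg : ∀ s < 0, W s = 0) {Wq : ℝ → ℝ} (hWq : Continuous Wq) (hWqneg : ∀ s < 0, Wq s = 0)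
    {q : ℝ} (hres : ∀ s ≥ 0, Wq s - W s = q * causalConv Wq W s) (hg : Measurable g)
    (hgb : LocallyBdd g) (hFb : LocallyBdd F) : IsVolterraSolution Wq (fun z => g z - q) y F := by
  refine ⟨fun x hx => ?_, fun x hx => ?_⟩
  · rw [hF.below x hx, hWneg _ (sub_neg.2 hx), hWqneg _ (sub_neg.2 hx)]
  have hFm := hF.measurable hW
  have hgF : ∀ A : ℝ → ℝ, Continuous A →
      IntervalIntegrable (fun z => A (x - z) * (g z * F z)) volume y x := fun _ hA =>
    intervalIntegrable_comp_sub_mul (h := fun z => g z * F z) hA (hg.mul hFm) (hgb.mul hFb) x y x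
  have hresF : ∫ u in y..x, q * (causalConv Wq W (x - u) * (g u * F u))
      = (∫ u in y..x, Wq (x - u) * (g u * F u)) - ∫ u in y..x, W (x - u) * (g u * F u) := by
    rw [← intervalIntegral.integral_sub (hgF _ hWq) (hgF _ hW)]
    refine integral_congr fun u hu => ?_
    rw [uIcc_of_le hx] at hu
    simp only [← mul_assoc, ← hres (x - u) (sub_nonneg.2 hu.2)]
    ring
  have hkill : ∫ z in y..x, Wq (x - z) * (g z - q) * F z
      = (∫ z in y..x, Wq (x - z) * (g z * F z)) - q * ∫ z in y..x, Wq (x - z) * F z := by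
    rw [← intervalIntegral.integral_const_mul, ← intervalIntegral.integral_sub (hgF _ hWq)
      ((intervalIntegrable_comp_sub_mul hWq hFm hFb x y x).const_mul q)]
    exact integral_congr fun z _ => by ring
  rw [hkill, hF.integral_comp_sub_mul hW hWneg hWq hg hgb hFb hx, mul_add,
    ← intervalIntegral.integral_const_mul, hresF, ← hres (x - y) (sub_nonneg.2 hx), hF.eq x hx]
  simp only [mul_assoc]
  ring

theorem sub_eq_integral_of_resolvent {g₁ F₁ : ℝ → ℝ} (hF₁ : IsVolterraSolution W g₁ y F₁)
    (hF : IsVolterraSolution W g y F) (hW : Continuous W) (hWneg : ∀ s < 0, W s = 0)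
    {Wq : ℝ → ℝ} (hWq : Continuous Wq) (hWqneg : ∀ s < 0, Wq s = 0) {q : ℝ}
    (hres : ∀ s ≥ 0, Wq s - W s = q * causalConv Wq W s) (hg₁ : Measurable g₁)
    (hg₁b : LocallyBdd g₁) (hg : Measurable g) (hgb : LocallyBdd g) (hF₁b : LocallyBdd F₁)
    (hFb : LocallyBdd F) (x : ℝ) :
    F₁ x - F x = ∫ z in y..x, Wq (x - z) * ((g₁ z - q) * F₁ z - (g z - q) * F z) :=
  (hF₁.change_of_killing hW hWneg hWq hWqneg hres hg₁ hg₁b hF₁b).sub_eq_integral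
    (hF.change_of_killing hW hWneg hWq hWqneg hres hg hgb hFb) hWq hWqneg (hg₁.sub_const q)
    (hg₁b.sub_const q) (hg.sub_const q) (hgb.sub_const q) hF₁b hFb x

end IsVolterraSolution

theorem intervalIntegral_eq_setIntegral_Ioi {φ : ℝ → ℝ} {x : ℝ} (hφ : ∀ z ≥ x, φ z = 0)
    (a : ℝ) : ∫ z in a..x, φ z = ∫ z in Ioi a, φ z := by
  rcases le_or_gt a x with hax | hxa
  · rw [integral_of_le hax]
    exact (setIntegral_eq_of_subset_of_forall_sdiff_eq_zero measurableSet_Ioi Ioc_subset_Ioi_self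
      fun z hz => hφ z (not_le.1 fun h => hz.2 ⟨hz.1, h⟩).le).symm
  · rw [integral_of_ge hxa.le, setIntegral_eq_zero_of_forall_eq_zero fun z hz => hφ z hz.1.le,
      setIntegral_eq_zero_of_forall_eq_zero (t := Ioi a) fun z hz => hφ z (hxa.trans hz).le,
      neg_zero]

theorem intervalIntegral_indicator_Ioi {φ : ℝ → ℝ} {x y : ℝ} (hy : ∀ z ≤ y, φ z = 0)
    (hx : ∀ z ≥ x, φ z = 0) (a : ℝ) :
    ∫ z in y..x, (Ioi a).indicator φ z = ∫ z in a..x, φ z := by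
  have hxind : ∀ z ≥ x, (Ioi a).indicator φ z = 0 := fun z hz => by simp [hx z hz]
  rw [intervalIntegral_eq_setIntegral_Ioi hxind, intervalIntegral_eq_setIntegral_Ioi hx,
    setIntegral_indicator measurableSet_Ioi]
  exact (setIntegral_eq_of_subset_of_forall_sdiff_eq_zero measurableSet_Ioi inter_subset_right
    fun z hz => hy z (not_lt.1 fun h => hz.2 ⟨h, hz.1⟩)).symm

theorem step_omega_scale_recursion_general
    (n : ℕ) (p : ℕ → ℝ) (xs : ℕ → ℝ)
    (hp : ∀ j, 0 ≤ p j)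
    (hxsmono : ∀ j, xs j ≤ xs (j + 1))
    (Wq : ℝ → ℝ → ℝ)  -- the family of q-scale functions
    (hWcont : ∀ q ≥ (0:ℝ), Continuous (Wq q))
    (hWneg : ∀ q ≥ (0:ℝ), ∀ x < (0:ℝ), Wq q x = 0)
    (hres : ∀ q₁ ≥ (0:ℝ), ∀ q₂ ≥ (0:ℝ), ∀ x ≥ (0:ℝ),
      Wq q₂ x - Wq q₁ x = (q₂ - q₁) * ∫ y in (0:ℝ)..x, Wq q₂ (x - y) * Wq q₁ y)
    (y : ℝ)
    (𝒲 : ℕ → ℝ → ℝ)  -- 𝒲 k = 𝒲_k(·, y)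
    (h𝒲bdd : ∀ k, LocallyBdd (𝒲 k))
    (h𝒲below : ∀ k, ∀ x < y, 𝒲 k x = Wq 0 (x - y))
    (h𝒲eq : ∀ k, ∀ x ≥ y,
      𝒲 k x = Wq 0 (x - y) + ∫ z in y..x, Wq 0 (x - z) * stepOmega p xs k z * 𝒲 k z) :
    ∀ k : ℕ, k + 1 ≤ n →
      (∀ x ≤ xs (k + 1), 𝒲 (k + 1) x = 𝒲 k x) ∧
      (∀ x : ℝ, 𝒲 (k + 1) x =
        𝒲 k x + (p (k + 1) - p k) * ∫ z in (xs (k + 1))..x, Wq (p (k + 1)) (x - z) * 𝒲 k z) := by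
  intro k _
  have hq := hp (k + 1)
  have hW₀ := hWcont 0 le_rfl
  have hW₀neg := hWneg 0 le_rfl
  have hWq := hWcont _ hq
  have hsol : ∀ j, IsVolterraSolution (Wq 0) (stepOmega p xs j) y (𝒲 j) :=
    fun j => ⟨h𝒲below j, h𝒲eq j⟩
  have hagree : ∀ x ≤ xs (k + 1), 𝒲 (k + 1) x = 𝒲 k x := fun x hx =>
    (hsol (k + 1)).eq_of_le (hsol k) hW₀ (measurable_stepOmega p xs k)
      (LocallyBdd.stepOmega p xs k) (h𝒲bdd _) (h𝒲bdd k) (fun z hz => stepOmega_succ_of_le hz.2) hx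
  refine ⟨hagree, fun x => ?_⟩
  have hdiff := (hsol (k + 1)).sub_eq_integral_of_resolvent (hsol k) hW₀ hW₀neg hWq (hWneg _ hq)
    (fun s hs => by simpa [causalConv] using hres 0 le_rfl _ hq s hs)
    (measurable_stepOmega p xs _) (LocallyBdd.stepOmega p xs _) (measurable_stepOmega p xs k)
    (LocallyBdd.stepOmega p xs k) (h𝒲bdd _) (h𝒲bdd k) x
  have hφy : ∀ z ≤ y, Wq (p (k + 1)) (x - z) * 𝒲 k z = 0 := fun z hz => by
    rw [(hsol k).eq_zero_of_le hW₀ hW₀neg hz, mul_zero]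
  have hφx : ∀ z ≥ x, Wq (p (k + 1)) (x - z) * 𝒲 k z = 0 := fun z hz => by
    rw [hWq.eq_zero_of_nonpos (hWneg _ hq) (sub_nonpos.2 hz), zero_mul]
  have hjump : ∀ z, Wq (p (k + 1)) (x - z) * ((stepOmega p xs (k + 1) z - p (k + 1)) * 𝒲 (k + 1) z
      - (stepOmega p xs k z - p (k + 1)) * 𝒲 k z) = (p (k + 1) - p k)
        * (Ioi (xs (k + 1))).indicator (fun z => Wq (p (k + 1)) (x - z) * 𝒲 k z) z := fun z => by
    rw [stepOmega_succ_sub_mul_sub (monotone_nat_of_le_succ hxsmono) hagree, indicator_mul_right]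
    ring
  simp_rw [hjump, intervalIntegral.integral_const_mul, intervalIntegral_indicator_Ioi hφy hφx]
    at hdiff
  linarith

theorem step_omega_scale_recursion
    (n : ℕ) (p : ℕ → ℝ) (xs : ℕ → ℝ)
    (hp : ∀ j, 0 ≤ p j)
    (hxs0 : 0 ≤ xs 1) (hxsmono : ∀ j, xs j ≤ xs (j + 1))
    (Wq : ℝ → ℝ → ℝ)  -- the family of q-scale functions
    (hWcont : ∀ q ≥ (0:ℝ), Continuous (Wq q))
    (hWneg : ∀ q ≥ (0:ℝ), ∀ x < (0:ℝ), Wq q x = 0)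
    (hres : ∀ q₁ ≥ (0:ℝ), ∀ q₂ ≥ (0:ℝ), ∀ x ≥ (0:ℝ),
      Wq q₂ x - Wq q₁ x = (q₂ - q₁) * ∫ y in (0:ℝ)..x, Wq q₂ (x - y) * Wq q₁ y)
    (y : ℝ)
    (𝒲 : ℕ → ℝ → ℝ)  -- 𝒲 k = 𝒲_k(·, y)
    (h𝒲bdd : ∀ k, LocallyBdd (𝒲 k))
    (h𝒲below : ∀ k, ∀ x < y, 𝒲 k x = Wq 0 (x - y))
    (h𝒲eq : ∀ k, ∀ x ≥ y,
      𝒲 k x = Wq 0 (x - y) + ∫ z in y..x, Wq 0 (x - z) * stepOmega p xs k z * 𝒲 k z) :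
    ∀ k : ℕ, k + 1 ≤ n →
      (∀ x ≤ xs (k + 1), 𝒲 (k + 1) x = 𝒲 k x) ∧
      (∀ x : ℝ, 𝒲 (k + 1) x =
        𝒲 k x + (p (k + 1) - p k) * ∫ z in (xs (k + 1))..x, Wq (p (k + 1)) (x - z) * 𝒲 k z) :=
  step_omega_scale_recursion_general n p xs hp hxsmono Wq hWcont hWneg hres y 𝒲 h𝒲bdd h𝒲below h𝒲eq
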